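/- In the Stalemate-revisited causal Kripke setting, the conjunction (p1,w1) = 1 ∧ (p2,w1) = 1 is an actual cause of r = 1 at world w0 by the MODIFIED HP definition, whereas neither (p1,w1) = 1 alone nor (p2,w1) = 1 alone is an actual cause of r = 1 at w0 by the modified definition. -/

import Mathlib

open Classical

noncomputable section

/-- A causal Kripke model `K = (S, W, Rel, F)`: the signature `S` consists of the disjoint
finite sets `Exo` of exogenous and `Endo` of endogenous variables together with a finite
nonempty range `range Γ w` of possible values for each variable `Γ` at each world `w`;
`World` is a finite set of possible worlds, `Rel` is the accessibility relation, and `eqs`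
assigns to each endogenous variable `X` and world `w` a structural equation computing the
value of `(X,w)` from the values of all the other variables (it does not depend on the
coordinate `(X,w)` itself, and its value lies in the range of `(X,w)`). -/
structure CKM where
  Exo : Type
  Endo : Type
  World : Type
  Val : Type
  exoFin : Fintype Exo
  endoFin : Fintype Endo
  worldFin : Fintype World
  Rel : World → World → Prop
  range : (Exo ⊕ Endo) → World → Finset Val
  range_nonempty : ∀ Γ w, (range Γ w).Nonempty
  eqs : Endo → World → (((Exo ⊕ Endo) × World) → Val) → Val
  eqs_mem : ∀ X w g, eqs X w g ∈ range (Sum.inr X) w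
  eqs_indep : ∀ X w g g',
    (∀ p, p ≠ (Sum.inr X, w) → g p = g' p) → eqs X w g = eqs X w g'

namespace CKM

/-- A context assigns to every exogenous variable at every world a value in its range. -/
def ValidContext (K : CKM) (t : K.Exo → K.World → K.Val) : Prop :=
  ∀ U w, t U w ∈ K.range (Sum.inl U) w

/-- `v` is a solution of the causal Kripke setting `(K, t)`: it agrees with the context `t`
on all exogenous variables and satisfies all structural equations. -/
def Solves (K : CKM) (t : K.Exo → K.World → K.Val)
    (v : ((K.Exo ⊕ K.Endo) × K.World) → K.Val) : Prop :=
  (∀ U w, v (Sum.inl U, w) = t U w) ∧ ∀ X w, v (Sum.inr X, w) = K.eqs X w v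

/-- The variable `p` influences the (endogenous) variable `q` (i.e. `q` directly causally
depends on `p`): some change in the value of `p`, keeping all other variables fixed
(within their ranges), changes the value of the structural equation of `q`. -/
def Influences (K : CKM) (p q : (K.Exo ⊕ K.Endo) × K.World) : Prop :=
  ∃ X w, q = (Sum.inr X, w) ∧
    ∃ g g', (∀ r, g r ∈ K.range r.1 r.2) ∧ (∀ r, g' r ∈ K.range r.1 r.2) ∧
      (∀ r, r ≠ p → g r = g' r) ∧ K.eqs X w g ≠ K.eqs X w g'

/-- A causal Kripke model is recursive if it contains no cyclic dependencies. -/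
def Recursive (K : CKM) : Prop :=
  ∀ p, ¬ Relation.TransGen K.Influences p p

/-- The causal Kripke model obtained from `K` by the intervention setting the variables in
`dom` to the values prescribed by `val`. -/
def doInt (K : CKM) (dom : Finset (K.Endo × K.World)) (val : K.Endo × K.World → K.Val) :
    CKM :=
  { K with
    eqs := fun X w g =>
      if (X, w) ∈ dom ∧ val (X, w) ∈ K.range (Sum.inr X) w then val (X, w)
      else K.eqs X w g
    eqs_mem := by
      intro X w g
      by_cases h : (X, w) ∈ dom ∧ val (X, w) ∈ K.range (Sum.inr X) w
      · simp only [if_pos h]; exact h.2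
      · simp only [if_neg h]; exact K.eqs_mem X w g
    eqs_indep := by
      intro X w g g' hgg'
      by_cases h : (X, w) ∈ dom ∧ val (X, w) ∈ K.range (Sum.inr X) w
      · simp only [if_pos h]
      · simp only [if_neg h]; exact K.eqs_indep X w g g' hgg' }

end CKM

/-- Events (modal-Boolean combinations of primitive events): primitive events `X = x` and
`(X,w) = x`, negation, conjunction and the modal operator `□`. -/
inductive Event (E W V : Type) : Type
  | eq : E → V → Event E W V
  | eqAt : E → W → V → Event E W V
  | neg : Event E W V → Event E W V
  | conj : Event E W V → Event E W V → Event E W V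
  | box : Event E W V → Event E W V

namespace CKM

/-- Satisfaction of an event at a world of `K`, relative to a solution `v` of the setting. -/
def SatE (K : CKM) (v : ((K.Exo ⊕ K.Endo) × K.World) → K.Val) :
    K.World → Event K.Endo K.World K.Val → Prop
  | w, .eq X x => v (Sum.inr X, w) = x
  | _, .eqAt X w' x => v (Sum.inr X, w') = x
  | w, .neg α => ¬ SatE K v w α
  | w, .conj α β => SatE K v w α ∧ SatE K v w β
  | w, .box α => ∀ w', K.Rel w w' → SatE K v w' α

/-- `(K,t,w) ⊩ [dom ← val] α` : the event `α` holds at `w` in the model obtained from the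
intervention `dom ← val`, in the context `t`. -/
def SatI (K : CKM) (t : K.Exo → K.World → K.Val) (dom : Finset (K.Endo × K.World))
    (val : K.Endo × K.World → K.Val) (w : K.World) (α : Event K.Endo K.World K.Val) :
    Prop :=
  ∀ v, (K.doInt dom val).Solves t v → (K.doInt dom val).SatE v w α

/-- AC1 : `α` actually holds at `w`, and each conjunct `(X_i, w_j) = y_ij` of `Y = y`
actually holds. -/
def AC1 (K : CKM) (t : K.Exo → K.World → K.Val) (w : K.World)
    (Y : Finset (K.Endo × K.World)) (y : K.Endo × K.World → K.Val)
    (α : Event K.Endo K.World K.Val) : Prop :=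
  ∀ v, K.Solves t v → K.SatE v w α ∧ ∀ p ∈ Y, v (Sum.inr p.1, p.2) = y p

/-- AC2a together with AC2bᵒ (they share the partition `Z`, `N` and the setting `n`):
there is a partition of the endogenous variables into `Z ⊇ Y` and `N` and settings `y'`
of `Y` and `n` of `N` such that `(K,t,w) ⊩ [Y ← y', N ← n] ¬α`, and, where `z*` are the
actual values of the variables of `Z`, for every subset `Z'` of `Z \ Y`,
`(K,t,w) ⊩ [Y ← y, N ← n, Z' ← z'*] α`. -/
def AC2o (K : CKM) (t : K.Exo → K.World → K.Val) (w : K.World)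
    (Y : Finset (K.Endo × K.World)) (y : K.Endo × K.World → K.Val)
    (α : Event K.Endo K.World K.Val) : Prop :=
  ∃ Z N : Finset (K.Endo × K.World), ∃ y' n : K.Endo × K.World → K.Val,
    Y ⊆ Z ∧ Disjoint Z N ∧ (∀ p : K.Endo × K.World, p ∈ Z ∨ p ∈ N) ∧
    (∀ p ∈ Y, y' p ∈ K.range (Sum.inr p.1) p.2) ∧
    (∀ p ∈ N, n p ∈ K.range (Sum.inr p.1) p.2) ∧
    K.SatI t (Y ∪ N) (fun p => if p ∈ Y then y' p else n p) w (.neg α) ∧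
    ∀ v, K.Solves t v → ∀ Z' ⊆ Z \ Y,
      K.SatI t (Y ∪ N ∪ Z')
        (fun p => if p ∈ Y then y p else if p ∈ N then n p else v (Sum.inr p.1, p.2)) w α

/-- AC2a together with AC2bᵘ (updated definition): as in `AC2o`, but moreover the
restoration of the actual values `z'*` must keep `α` true for every subset `N'` of `N`. -/
def AC2u (K : CKM) (t : K.Exo → K.World → K.Val) (w : K.World)
    (Y : Finset (K.Endo × K.World)) (y : K.Endo × K.World → K.Val)
    (α : Event K.Endo K.World K.Val) : Prop :=
  ∃ Z N : Finset (K.Endo × K.World), ∃ y' n : K.Endo × K.World → K.Val,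
    Y ⊆ Z ∧ Disjoint Z N ∧ (∀ p : K.Endo × K.World, p ∈ Z ∨ p ∈ N) ∧
    (∀ p ∈ Y, y' p ∈ K.range (Sum.inr p.1) p.2) ∧
    (∀ p ∈ N, n p ∈ K.range (Sum.inr p.1) p.2) ∧
    K.SatI t (Y ∪ N) (fun p => if p ∈ Y then y' p else n p) w (.neg α) ∧
    ∀ v, K.Solves t v → ∀ Z' ⊆ Z \ Y, ∀ N' ⊆ N,
      K.SatI t (Y ∪ N' ∪ Z')
        (fun p => if p ∈ Y then y p else if p ∈ N' then n p else v (Sum.inr p.1, p.2)) w α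

/-- AC2aᵐ (modified definition): there are a set `N` of endogenous variables and a setting
`y'` of the variables in `Y` such that, where `n*` are the actual values of the variables
in `N`, `(K,t,w) ⊩ [Y ← y', N ← n*] ¬α`. -/
def AC2m (K : CKM) (t : K.Exo → K.World → K.Val) (w : K.World)
    (Y : Finset (K.Endo × K.World)) (y : K.Endo × K.World → K.Val)
    (α : Event K.Endo K.World K.Val) : Prop :=
  ∃ N : Finset (K.Endo × K.World), ∃ y' : K.Endo × K.World → K.Val,
    (∀ p ∈ Y, y' p ∈ K.range (Sum.inr p.1) p.2) ∧
    ∀ v, K.Solves t v →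
      K.SatI t (Y ∪ N)
        (fun p => if p ∈ Y then y' p else v (Sum.inr p.1, p.2)) w (.neg α)

/-- `Y = y` is an actual cause of `α` in `(K,t)` at `w` by the ORIGINAL HP definition. -/
def IsCauseO (K : CKM) (t : K.Exo → K.World → K.Val) (w : K.World)
    (Y : Finset (K.Endo × K.World)) (y : K.Endo × K.World → K.Val)
    (α : Event K.Endo K.World K.Val) : Prop :=
  K.AC1 t w Y y α ∧ K.AC2o t w Y y α ∧
    ∀ Y' ⊂ Y, ∀ y'' : K.Endo × K.World → K.Val,
      ¬ (K.AC1 t w Y' y'' α ∧ K.AC2o t w Y' y'' α)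

/-- `Y = y` is an actual cause of `α` in `(K,t)` at `w` by the UPDATED HP definition. -/
def IsCauseU (K : CKM) (t : K.Exo → K.World → K.Val) (w : K.World)
    (Y : Finset (K.Endo × K.World)) (y : K.Endo × K.World → K.Val)
    (α : Event K.Endo K.World K.Val) : Prop :=
  K.AC1 t w Y y α ∧ K.AC2u t w Y y α ∧
    ∀ Y' ⊂ Y, ∀ y'' : K.Endo × K.World → K.Val,
      ¬ (K.AC1 t w Y' y'' α ∧ K.AC2u t w Y' y'' α)

/-- `Y = y` is an actual cause of `α` in `(K,t)` at `w` by the MODIFIED HP definition. -/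
def IsCauseM (K : CKM) (t : K.Exo → K.World → K.Val) (w : K.World)
    (Y : Finset (K.Endo × K.World)) (y : K.Endo × K.World → K.Val)
    (α : Event K.Endo K.World K.Val) : Prop :=
  K.AC1 t w Y y α ∧ K.AC2m t w Y y α ∧
    ∀ Y' ⊂ Y, ∀ y'' : K.Endo × K.World → K.Val,
      ¬ (K.AC1 t w Y' y'' α ∧ K.AC2m t w Y' y'' α)

/-- `(X,w) = x` is part of a cause of `α` in `(K,t)` at `w'` by the original HP
definition: it is a conjunct of some actual cause `Y = y` of `α` at `w'`. -/
def PartOfCauseO (K : CKM) (t : K.Exo → K.World → K.Val) (w' : K.World)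
    (X : K.Endo) (w : K.World) (x : K.Val) (α : Event K.Endo K.World K.Val) : Prop :=
  ∃ Y y, K.IsCauseO t w' Y y α ∧ (X, w) ∈ Y ∧ y (X, w) = x

/-- `(X,w) = x` is part of a cause of `α` in `(K,t)` at `w'` by the updated HP
definition. -/
def PartOfCauseU (K : CKM) (t : K.Exo → K.World → K.Val) (w' : K.World)
    (X : K.Endo) (w : K.World) (x : K.Val) (α : Event K.Endo K.World K.Val) : Prop :=
  ∃ Y y, K.IsCauseU t w' Y y α ∧ (X, w) ∈ Y ∧ y (X, w) = x

/-- `(X,w) = x` is part of a cause of `α` in `(K,t)` at `w'` by the modified HP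
definition. -/
def PartOfCauseM (K : CKM) (t : K.Exo → K.World → K.Val) (w' : K.World)
    (X : K.Endo) (w : K.World) (x : K.Val) (α : Event K.Endo K.World K.Val) : Prop :=
  ∃ Y y, K.IsCauseM t w' Y y α ∧ (X, w) ∈ Y ∧ y (X, w) = x

end CKM

/-- Exogenous variables of the Stalemate-revisited example: `U = (U1, U2, U3)`. -/
inductive SrExo : Type
  | u1 | u2 | u3
deriving DecidableEq

instance instFintypeSrExo : Fintype SrExo where
  elems := {SrExo.u1, SrExo.u2, SrExo.u3}
  complete := by intro x; cases x <;> simp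

/-- Endogenous variables of the Stalemate-revisited example: `p1` = "the king is in check
by the opponent's queen", `p2` = "the king is in check by the opponent's king", `q` = "the
king and the knight are the only pieces that can move", `r` = "the player is forced to
move the knight". -/
inductive SrEndo : Type
  | p1 | p2 | q | r
deriving DecidableEq

instance instFintypeSrEndo : Fintype SrEndo where
  elems := {SrEndo.p1, SrEndo.p2, SrEndo.q, SrEndo.r}
  complete := by intro x; cases x <;> simp

/-- The Stalemate-revisited causal Kripke model: worlds `w0, w1, w2` (as `Fin 3`),
accessibility `Rel = {(w0,w1), (w0,w2)}`, binary variables with `(p1,w) = (U1,w)`,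
`(p2,w) = (U2,w)`, `(q,w) = (U3,w)` and `r = ¬(p1 ∨ p2) ∧ q ∧ □(p1 ∨ p2)`. -/
@[reducible] def stRevisited : CKM where
  Exo := SrExo
  Endo := SrEndo
  World := Fin 3
  Val := Bool
  exoFin := inferInstance
  endoFin := inferInstance
  worldFin := inferInstance
  Rel := fun a b => a = 0 ∧ b ≠ 0
  range := fun _ _ => Finset.univ
  range_nonempty := fun _ _ => ⟨true, Finset.mem_univ _⟩
  eqs := fun X w g =>
    match X with
    | .p1 => g (Sum.inl SrExo.u1, w)
    | .p2 => g (Sum.inl SrExo.u2, w)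
    | .q => g (Sum.inl SrExo.u3, w)
    | .r =>
        if (¬ (g (Sum.inr SrEndo.p1, w) = true ∨ g (Sum.inr SrEndo.p2, w) = true)) ∧
            g (Sum.inr SrEndo.q, w) = true ∧
            ∀ w' : Fin 3, ((w : Fin 3) = 0 ∧ w' ≠ 0) →
              (g (Sum.inr SrEndo.p1, w') = true ∨ g (Sum.inr SrEndo.p2, w') = true)
        then true else false
  eqs_mem := fun _ _ _ => Finset.mem_univ _
  eqs_indep := by
    intro X w g g' h
    cases X with
    | p1 => exact h (Sum.inl SrExo.u1, w) (by simp)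
    | p2 => exact h (Sum.inl SrExo.u2, w) (by simp)
    | q => exact h (Sum.inl SrExo.u3, w) (by simp)
    | r =>
      refine if_congr ?_ rfl rfl
      have hp1 : ∀ w' : Fin 3, g (Sum.inr SrEndo.p1, w') = g' (Sum.inr SrEndo.p1, w') :=
        fun w' => h _ (by simp)
      have hp2 : ∀ w' : Fin 3, g (Sum.inr SrEndo.p2, w') = g' (Sum.inr SrEndo.p2, w') :=
        fun w' => h _ (by simp)
      have hq : g (Sum.inr SrEndo.q, w) = g' (Sum.inr SrEndo.q, w) := h _ (by simp)
      simp only [hp1, hp2, hq]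

/-- The context of the Stalemate-revisited example: `U = (U1,U2,U3)` is set to `(0,0,1)`
at `w0`, `(1,1,1)` at `w1` and `(0,1,0)` at `w2`. -/
def stRevisitedCtx : SrExo → Fin 3 → Bool := fun U w =>
  match U with
  | SrExo.u1 => decide (w = 1)
  | SrExo.u2 => decide (w = 1 ∨ w = 2)
  | SrExo.u3 => decide (w = 0 ∨ w = 1)

/-!
In the actual world neither check holds at `w0` while each successor `w1`, `w2` has one, so
`r` holds at `w0`. Setting both checks at `w1` to `0` falsifies `□(p1 ∨ p2)` and with it `r`,
so the pair satisfies AC2aᵐ. An intervention that may change only one of them, and must keep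
every variable of `N` at its actual value, leaves the other check at `w1` true and cannot
falsify `r`; so no proper part of the pair satisfies AC2aᵐ, which gives AC3 for the pair and
refutes both singletons.
-/

theorem Finset.subset_singleton_or_of_ssubset_pair {α : Type*} [DecidableEq α] {a b : α}
    {s : Finset α} (h : s ⊂ {a, b}) : s ⊆ {a} ∨ s ⊆ {b} := by
  obtain ⟨x, hx, hsx⟩ := Finset.ssubset_iff_exists_subset_erase.1 h
  rcases Finset.mem_insert.1 hx with rfl | hx
  · exact Or.inr (hsx.trans (Finset.erase_insert_subset _ _))
  · rw [Finset.mem_singleton.1 hx, Finset.pair_comm] at hsx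
    exact Or.inl (hsx.trans (Finset.erase_insert_subset _ _))

namespace CKM

variable {K : CKM} {t : K.Exo → K.World → K.Val}

def step (K : CKM) (t : K.Exo → K.World → K.Val) (g : (K.Exo ⊕ K.Endo) × K.World → K.Val) :
    (K.Exo ⊕ K.Endo) × K.World → K.Val
  | (.inl U, w) => t U w
  | (.inr X, w) => K.eqs X w g

theorem solves_iff_isFixedPt {v : (K.Exo ⊕ K.Endo) × K.World → K.Val} :
    K.Solves t v ↔ Function.IsFixedPt (K.step t) v := by
  refine ⟨fun ⟨hexo, hendo⟩ => funext ?_, fun hv => ⟨fun U w => ?_, fun X w => ?_⟩⟩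
  · rintro ⟨U | X, w⟩
    exacts [(hexo U w).symm, (hendo X w).symm]
  · exact (congrFun hv (.inl U, w)).symm
  · exact (congrFun hv (.inr X, w)).symm

theorem solves_iterate_step {n : ℕ} {g : (K.Exo ⊕ K.Endo) × K.World → K.Val}
    (h : (K.step t)^[n + 1] g = (K.step t)^[n] g) : K.Solves t ((K.step t)^[n] g) := by
  rw [solves_iff_isFixedPt, Function.IsFixedPt, ← Function.iterate_succ_apply' (K.step t), h]

theorem Solves.apply_of_mem {dom : Finset (K.Endo × K.World)} {val : K.Endo × K.World → K.Val}
    {v : (K.Exo ⊕ K.Endo) × K.World → K.Val} (hv : (K.doInt dom val).Solves t v)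
    {X : K.Endo} {w : K.World} (h : (X, w) ∈ dom) (hval : val (X, w) ∈ K.range (.inr X) w) :
    v (.inr X, w) = val (X, w) :=
  (hv.2 X w).trans (if_pos ⟨h, hval⟩)

theorem Solves.apply_of_notMem {dom : Finset (K.Endo × K.World)}
    {val : K.Endo × K.World → K.Val} {v : (K.Exo ⊕ K.Endo) × K.World → K.Val}
    (hv : (K.doInt dom val).Solves t v) {X : K.Endo} {w : K.World} (h : (X, w) ∉ dom) :
    v (.inr X, w) = K.eqs X w v :=
  (hv.2 X w).trans (if_neg fun hc => h hc.1)

theorem solves_doInt_empty_iff {val : K.Endo × K.World → K.Val}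
    {v : (K.Exo ⊕ K.Endo) × K.World → K.Val} :
    (K.doInt ∅ val).Solves t v ↔ K.Solves t v := by
  refine and_congr_right fun _ => forall₂_congr fun X w => ?_
  simp only [doInt, Finset.notMem_empty, false_and, if_false]

end CKM

namespace stRevisited

open CKM

variable {dom : Finset (SrEndo × Fin 3)} {val : SrEndo × Fin 3 → Bool}
  {v : (SrExo ⊕ SrEndo) × Fin 3 → Bool}

/-- `r` depends on `p1, p2, q` only, and these only on the context, so three rounds of
evaluation reach the solution from any starting point. -/
theorem step_iterate_three_eq (dom : Finset (SrEndo × Fin 3)) (val : SrEndo × Fin 3 → Bool)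
    (g g' : (SrExo ⊕ SrEndo) × Fin 3 → Bool) :
    ((stRevisited.doInt dom val).step stRevisitedCtx)^[3] g =
      ((stRevisited.doInt dom val).step stRevisitedCtx)^[3] g' := by
  funext p
  rcases p with ⟨U | X, w⟩
  · rfl
  · cases X <;> rfl

theorem exists_solves (dom : Finset (SrEndo × Fin 3)) (val : SrEndo × Fin 3 → Bool) :
    ∃ v : (SrExo ⊕ SrEndo) × Fin 3 → Bool,
      (stRevisited.doInt dom val).Solves stRevisitedCtx v :=
  ⟨_, solves_iterate_step (step_iterate_three_eq dom val _ fun _ => false)⟩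

theorem apply_eq_of_notMem {dom' : Finset (SrEndo × Fin 3)} {val' : SrEndo × Fin 3 → Bool}
    {v' : (SrExo ⊕ SrEndo) × Fin 3 → Bool}
    (hv : (stRevisited.doInt dom val).Solves stRevisitedCtx v)
    (hv' : (stRevisited.doInt dom' val').Solves stRevisitedCtx v')
    {X : SrEndo} (hX : X ≠ .r) {w : Fin 3} (h : (X, w) ∉ dom) (h' : (X, w) ∉ dom') :
    v (.inr X, w) = v' (.inr X, w) := by
  rw [hv.apply_of_notMem h, hv'.apply_of_notMem h']
  cases X
  case r => exact absurd rfl hX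
  all_goals exact (hv.1 _ w).trans (hv'.1 _ w).symm

theorem r_zero_eq_true_iff (hv : (stRevisited.doInt dom val).Solves stRevisitedCtx v)
    (hr : (SrEndo.r, 0) ∉ dom) :
    v (.inr .r, 0) = true ↔
      v (.inr .p1, 0) = false ∧ v (.inr .p2, 0) = false ∧ v (.inr .q, 0) = true ∧
        (v (.inr .p1, 1) = true ∨ v (.inr .p2, 1) = true) ∧
        (v (.inr .p1, 2) = true ∨ v (.inr .p2, 2) = true) := by
  rw [hv.apply_of_notMem hr]
  simp [Fin.forall_fin_succ, and_assoc]

theorem actual_values (hv : stRevisited.Solves stRevisitedCtx v) :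
    v (.inr .r, 0) = true ∧ v (.inr .p1, 1) = true ∧ v (.inr .p2, 1) = true := by
  have hp1 (w : Fin 3) : v (.inr .p1, w) = stRevisitedCtx .u1 w := (hv.2 _ w).trans (hv.1 _ w)
  have hp2 (w : Fin 3) : v (.inr .p2, w) = stRevisitedCtx .u2 w := (hv.2 _ w).trans (hv.1 _ w)
  have hq (w : Fin 3) : v (.inr .q, w) = stRevisitedCtx .u3 w := (hv.2 _ w).trans (hv.1 _ w)
  have hv₀ : (stRevisited.doInt ∅ fun _ => true).Solves stRevisitedCtx v :=
    solves_doInt_empty_iff.2 hv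
  rw [r_zero_eq_true_iff hv₀ (Finset.notMem_empty _), hp1, hp1, hp1, hp2, hp2, hp2, hq]
  decide

theorem apply_eq_of_agrees_off {e : SrEndo × Fin 3} {v' : (SrExo ⊕ SrEndo) × Fin 3 → Bool}
    (hv : stRevisited.Solves stRevisitedCtx v)
    (hv' : (stRevisited.doInt dom val).Solves stRevisitedCtx v')
    (hval : ∀ p ∈ dom, p ≠ e → val p = v (.inr p.1, p.2))
    {X : SrEndo} {w : Fin 3} (hX : X ≠ .r) (hXe : (X, w) ≠ e) :
    v' (.inr X, w) = v (.inr X, w) := by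
  by_cases h : (X, w) ∈ dom
  · rw [hv'.apply_of_mem h (Finset.mem_univ _), hval _ h hXe]
  · exact apply_eq_of_notMem hv' ((solves_doInt_empty_iff (val := val)).2 hv) hX h
      (Finset.notMem_empty _)

theorem r_zero_of_agrees_off {e : SrEndo × Fin 3} (he : e = (.p1, 1) ∨ e = (.p2, 1))
    {v' : (SrExo ⊕ SrEndo) × Fin 3 → Bool} (hv : stRevisited.Solves stRevisitedCtx v)
    (hv' : (stRevisited.doInt dom val).Solves stRevisitedCtx v')
    (hval : ∀ p ∈ dom, p ≠ e → val p = v (.inr p.1, p.2)) :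
    v' (.inr .r, 0) = true := by
  obtain ⟨hr, hp1, hp2⟩ := actual_values hv
  have hr_ne : (SrEndo.r, (0 : Fin 3)) ≠ e := by rcases he with rfl | rfl <;> decide
  by_cases hr₀ : (SrEndo.r, (0 : Fin 3)) ∈ dom
  · rw [hv'.apply_of_mem hr₀ (Finset.mem_univ _), hval _ hr₀ hr_ne, hr]
  have hv₀ := (solves_doInt_empty_iff (val := val)).2 hv
  obtain ⟨h10, h20, hq0, -, h2⟩ := (r_zero_eq_true_iff hv₀ (Finset.notMem_empty _)).1 hr
  rw [r_zero_eq_true_iff hv' hr₀]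
  rcases he with rfl | rfl <;>
    simp [apply_eq_of_agrees_off hv hv' hval, h10, h20, hq0, h2, hp1, hp2]

theorem AC1_pair :
    stRevisited.AC1 stRevisitedCtx 0 {(SrEndo.p1, 1), (SrEndo.p2, 1)} (fun _ => true)
      (.eq .r true) := by
  intro v hv
  obtain ⟨hr, hp1, hp2⟩ := actual_values hv
  exact ⟨hr, by simp [hp1, hp2]⟩

theorem AC2m_pair :
    stRevisited.AC2m stRevisitedCtx 0 {(SrEndo.p1, 1), (SrEndo.p2, 1)} (fun _ => true)
      (.eq .r true) := by
  refine ⟨∅, fun _ => false, fun _ _ => Finset.mem_univ _,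
    fun v _ (v' : (SrExo ⊕ SrEndo) × Fin 3 → Bool) hv' hr => ?_⟩
  obtain ⟨-, -, -, h1 | h1, -⟩ := (r_zero_eq_true_iff hv' (by simp)).1 hr
  · rw [hv'.apply_of_mem (X := .p1) (w := 1) (by simp) (Finset.mem_univ _)] at h1
    simp at h1
  · rw [hv'.apply_of_mem (X := .p2) (w := 1) (by simp) (Finset.mem_univ _)] at h1
    simp at h1

theorem not_AC2m_of_subset_singleton {e : SrEndo × Fin 3} (he : e = (.p1, 1) ∨ e = (.p2, 1))
    {Y : Finset (SrEndo × Fin 3)} (hY : Y ⊆ {e}) (y : SrEndo × Fin 3 → Bool) :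
    ¬ stRevisited.AC2m stRevisitedCtx 0 Y y (.eq .r true) := by
  rintro ⟨N, y', -, hneg⟩
  obtain ⟨v, hv⟩ := exists_solves ∅ fun _ => true
  replace hv := solves_doInt_empty_iff.1 hv
  refine (exists_solves _ _).elim fun v' hv' =>
    hneg v hv v' hv' (r_zero_of_agrees_off he hv hv' fun p _ hpe => ?_)
  exact if_neg fun hp => hpe (Finset.mem_singleton.1 (hY hp))

end stRevisited

/-- In the Stalemate-revisited causal Kripke setting, the conjunction
`(p1,w1) = 1 ∧ (p2,w1) = 1` is an actual cause of `r = 1` at world `w0` by the MODIFIED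
HP definition, whereas neither `(p1,w1) = 1` alone nor `(p2,w1) = 1` alone is an actual
cause of `r = 1` at `w0` by the modified definition. -/
theorem stRevisited_modified_causes :
    stRevisited.IsCauseM stRevisitedCtx 0
      {(SrEndo.p1, (1 : Fin 3)), (SrEndo.p2, (1 : Fin 3))} (fun _ => true)
      (Event.eq SrEndo.r true) ∧
    ¬ stRevisited.IsCauseM stRevisitedCtx 0 {(SrEndo.p1, (1 : Fin 3))} (fun _ => true)
      (Event.eq SrEndo.r true) ∧
    ¬ stRevisited.IsCauseM stRevisitedCtx 0 {(SrEndo.p2, (1 : Fin 3))} (fun _ => true)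
      (Event.eq SrEndo.r true) := by
  refine ⟨⟨stRevisited.AC1_pair, stRevisited.AC2m_pair, fun Y hY y h => ?_⟩,
    fun h => ?_, fun h => ?_⟩
  · rcases Finset.subset_singleton_or_of_ssubset_pair hY with hY | hY
    exacts [stRevisited.not_AC2m_of_subset_singleton (.inl rfl) hY y h.2,
      stRevisited.not_AC2m_of_subset_singleton (.inr rfl) hY y h.2]
  · exact stRevisited.not_AC2m_of_subset_singleton (.inl rfl) subset_rfl _ h.2.1
  · exact stRevisited.not_AC2m_of_subset_singleton (.inr rfl) subset_rfl _ h.2.1
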